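/- Let ρ be an n×n positive semidefinite complex matrix with trace 1 (a density matrix). For any divisor m of n, ℓ(m|ρ) + ℓ̄(m|ρ) ≤ 1 ≤ u(m|ρ) + ū(m|ρ), where ℓ̄(m|ρ) = ℓ(¬m|ρ) − ℓ(1|ρ) and ū(m|ρ) = 1 − ℓ(¬¬m|ρ). -/

import Mathlib

open Matrix BigOperators
open scoped ComplexOrder

/-- The projector `P(m)` onto the position states of subsystem `Σ(m)` embedded in `Σ(n)`:
`P(m) = ∑_{r=0}^{m-1} E_{(n/m)r}` where `E_j` is the diagonal matrix unit at `(j,j)`. -/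
noncomputable def projP (n : ℕ) [NeZero n] (m : ℕ) : Matrix (ZMod n) (ZMod n) ℂ :=
  ∑ r ∈ Finset.range m,
    Matrix.single ((n / m * r : ℕ) : ZMod n) ((n / m * r : ℕ) : ZMod n) (1 : ℂ)

/-- The lower probability `ℓ(m|ρ) = Tr(P(m) ρ)` (a real number). -/
noncomputable def lowerProb (n : ℕ) [NeZero n] (m : ℕ)
    (ρ : Matrix (ZMod n) (ZMod n) ℂ) : ℝ :=
  (Matrix.trace (projP n m * ρ)).re

/-- The negation `¬m = ∏_p p^{v_p(n)}` over primes `p` dividing `n` but not `m`. -/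
def negDiv (n m : ℕ) : ℕ :=
  ∏ p ∈ n.primeFactors.filter (fun p => ¬ p ∣ m), p ^ (n.factorization p)

/-- The upper probability `u(m|ρ) = 1 - ℓ(¬m|ρ) + ℓ(1|ρ)`. -/
noncomputable def upperProb (n : ℕ) [NeZero n] (m : ℕ)
    (ρ : Matrix (ZMod n) (ZMod n) ℂ) : ℝ :=
  1 - lowerProb n (negDiv n m) ρ + lowerProb n 1 ρ

lemma negDiv_dvd (n m : ℕ) (hn : n ≠ 0) : negDiv n m ∣ n := by
  have h1 : negDiv n m ∣ ∏ p ∈ n.primeFactors, p ^ (n.factorization p) :=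
    Finset.prod_dvd_prod_of_subset _ _ _ (Finset.filter_subset _ _)
  have h2 : ∏ p ∈ n.primeFactors, p ^ (n.factorization p) = n := by
    rw [← Nat.support_factorization, ← Finsupp.prod]
    exact Nat.factorization_prod_pow_eq_self hn
  rwa [h2] at h1

lemma coprime_negDiv (n m : ℕ) : Nat.Coprime m (negDiv n m) := by
  apply Nat.Coprime.prod_right
  intro p hp
  simp only [Finset.mem_filter, Nat.mem_primeFactors] at hp
  exact Nat.Coprime.pow_right _
    (((Nat.Prime.coprime_iff_not_dvd hp.1.1).mpr hp.2).symm)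

lemma trace_std_mul {n : ℕ} [NeZero n] (i : ZMod n) (ρ : Matrix (ZMod n) (ZMod n) ℂ) :
    Matrix.trace (Matrix.single i i (1 : ℂ) * ρ) = ρ i i := by
  rw [Matrix.trace]
  rw [Finset.sum_eq_single i]
  · simp [Matrix.diag, Matrix.single_mul_apply_same]
  · intro b _ hb
    simp [Matrix.diag, Matrix.mul_apply, Matrix.single, Ne.symm hb]
  · simp

lemma lowerProb_eq_sum {n : ℕ} [NeZero n] (m : ℕ) (ρ : Matrix (ZMod n) (ZMod n) ℂ) :
    lowerProb n m ρ =
      ∑ r ∈ Finset.range m, (ρ ((n / m * r : ℕ) : ZMod n) ((n / m * r : ℕ) : ZMod n)).re := by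
  unfold lowerProb projP
  rw [Finset.sum_mul, Matrix.trace_sum, Complex.re_sum]
  exact Finset.sum_congr rfl fun r _ => by rw [trace_std_mul]

/-- Key lemma: for coprime divisors `m, k` of `n`,  `ℓ(m) + ℓ(k) ≤ 1 + ℓ(1)`. -/
lemma lowerProb_add_lowerProb_le {n : ℕ} [NeZero n] (ρ : Matrix (ZMod n) (ZMod n) ℂ)
    (hρ : ρ.PosSemidef) (htr : ρ.trace = 1) (m k : ℕ) (hm : m ∣ n) (hk : k ∣ n)
    (hco : Nat.Coprime m k) :
    lowerProb n m ρ + lowerProb n k ρ ≤ 1 + lowerProb n 1 ρ := by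
  have hn : n ≠ 0 := NeZero.ne n
  set d : ZMod n → ℝ := fun j => (ρ j j).re with hd
  have hdnn : ∀ j, 0 ≤ d j := by
    intro j
    have := hρ.dotProduct_mulVec_nonneg (Pi.single j 1)
    simp [dotProduct, Pi.single_apply] at this
    simpa using (Complex.le_def.mp this).1
  -- the sets of positions
  have hinj : ∀ l : ℕ, l ∣ n → Set.InjOn (fun r : ℕ => ((n / l * r : ℕ) : ZMod n))
      (Finset.range l) := by
    intro l hl r hr s hs hrs
    simp only [Finset.coe_range, Set.mem_Iio] at hr hs
    have hl0 : 0 < l := Nat.pos_of_ne_zero (by rintro rfl; simp at hl; exact hn hl)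
    have hnl : 0 < n / l := Nat.div_pos (Nat.le_of_dvd (Nat.pos_of_ne_zero hn) hl) hl0
    have hlt : ∀ t : ℕ, t < l → n / l * t < n := by
      intro t ht
      calc n / l * t < n / l * l := (Nat.mul_lt_mul_left hnl).mpr ht
        _ = n := Nat.div_mul_cancel hl
    have := congrArg ZMod.val hrs
    rw [ZMod.val_natCast_of_lt (hlt r hr), ZMod.val_natCast_of_lt (hlt s hs)] at this
    exact Nat.eq_of_mul_eq_mul_left hnl this
  have hsum : ∀ l : ℕ, l ∣ n → lowerProb n l ρ =
      ∑ j ∈ (Finset.range l).image (fun r : ℕ => ((n / l * r : ℕ) : ZMod n)), d j := by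
    intro l hl
    rw [lowerProb_eq_sum, Finset.sum_image (fun x hx y hy h => hinj l hl hx hy h)]
  set S : ℕ → Finset (ZMod n) :=
    fun l => (Finset.range l).image (fun r : ℕ => ((n / l * r : ℕ) : ZMod n)) with hS
  -- torsion: elements of S l are killed by l
  have htor : ∀ l : ℕ, l ∣ n → ∀ x ∈ S l, (l : ZMod n) * x = 0 := by
    intro l hl x hx
    simp only [hS, Finset.mem_image] at hx
    obtain ⟨r, _, rfl⟩ := hx
    have : (l * (n / l * r) : ℕ) = n * r := by
      rw [← mul_assoc, Nat.mul_div_cancel' hl]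
    calc (l : ZMod n) * (((n / l * r : ℕ) : ZMod n)) = ((l * (n / l * r) : ℕ) : ZMod n) := by
          push_cast; ring
      _ = ((n * r : ℕ) : ZMod n) := by rw [this]
      _ = 0 := by push_cast; simp [ZMod.natCast_self]
  -- intersection is contained in {0}
  have hint : S m ∩ S k ⊆ {0} := by
    intro x hx
    rw [Finset.mem_inter] at hx
    have h1 := htor m hm x hx.1
    have h2 := htor k hk x hx.2
    obtain ⟨a, b, hab⟩ := Nat.isCoprime_iff_coprime.mpr hco
    have : ((a * m + b * k : ℤ) : ZMod n) * x = x := by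
      rw [hab]; push_cast; ring
    rw [Finset.mem_singleton]
    calc x = ((a * m + b * k : ℤ) : ZMod n) * x := this.symm
      _ = (a : ZMod n) * ((m : ZMod n) * x) + (b : ZMod n) * ((k : ZMod n) * x) := by
          push_cast; ring
      _ = 0 := by rw [h1, h2]; ring
  -- total trace
  have htot : ∑ j : ZMod n, d j = 1 := by
    have : (ρ.trace).re = 1 := by rw [htr]; simp
    rw [← this, Matrix.trace, Complex.re_sum]
    rfl
  have hl1 : lowerProb n 1 ρ = d 0 := by
    rw [hsum 1 (one_dvd n)]
    simp
  rw [hsum m hm, hsum k hk, hl1]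
  rw [← Finset.sum_union_inter]
  have h1 : ∑ j ∈ S m ∪ S k, d j ≤ 1 := by
    rw [← htot]
    exact Finset.sum_le_sum_of_subset_of_nonneg (Finset.subset_univ _)
      (fun j _ _ => hdnn j)
  have h2 : ∑ j ∈ S m ∩ S k, d j ≤ d 0 := by
    have : ∑ j ∈ ({0} : Finset (ZMod n)), d j = d 0 := Finset.sum_singleton _ _
    rw [← this]
    exact Finset.sum_le_sum_of_subset_of_nonneg hint (fun j _ _ => hdnn j)
  linarith

/-- `ℓ(m|ρ) + ℓ̄(m|ρ) ≤ 1 ≤ u(m|ρ) + ū(m|ρ)`, where `ℓ̄(m|ρ) = ℓ(¬m|ρ) − ℓ(1|ρ)` and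
`ū(m|ρ) = 1 − ℓ(¬¬m|ρ)`. -/
theorem lower_upper_complement_ineq (n : ℕ) [NeZero n] (ρ : Matrix (ZMod n) (ZMod n) ℂ)
    (hρ : ρ.PosSemidef) (htr : ρ.trace = 1) (m : ℕ) (hm : m ∣ n) :
    lowerProb n m ρ + (lowerProb n (negDiv n m) ρ - lowerProb n 1 ρ) ≤ 1 ∧
    1 ≤ upperProb n m ρ + (1 - lowerProb n (negDiv n (negDiv n m)) ρ) := by
  have hn : n ≠ 0 := NeZero.ne n
  have h1 := lowerProb_add_lowerProb_le ρ hρ htr m (negDiv n m) hm (negDiv_dvd n m hn)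
    (coprime_negDiv n m)
  have h2 := lowerProb_add_lowerProb_le ρ hρ htr (negDiv n m) (negDiv n (negDiv n m))
    (negDiv_dvd n m hn) (negDiv_dvd n (negDiv n m) hn) (coprime_negDiv n (negDiv n m))
  unfold upperProb
  constructor <;> linarith
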